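/- Let G = A_Γ be an even Artin group of FC-type and let X be a subset of G. Denote by P(Y) the unique minimal parabolic subgroup of G containing a subset Y. Then there exists a finite subset X' ⊆ X such that P(X) = P(X'). -/
import Mathlib


/-- A labeled simplicial graph: a simple graph whose edges carry labels `≥ 2`. -/
structure LabeledGraph (V : Type) where
  Adj : V → V → Prop
  symm : ∀ {u v}, Adj u v → Adj v u
  loopless : ∀ v, ¬ Adj v v
  label : V → V → ℕ
  label_symm : ∀ u v, label u v = label v u
  two_le_label : ∀ {u v}, Adj u v → 2 ≤ label u v

namespace LabeledGraph

variable {V : Type} (Γ : LabeledGraph V)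

/-- The alternating word `uvuv⋯` of length `m` in the free group on the vertices. -/
def artinWord (u v : V) (m : ℕ) : FreeGroup V :=
  ((List.range m).map (fun i => FreeGroup.of (if i % 2 = 0 then u else v))).prod

/-- The Artin relations of a labeled graph. -/
def artinRels : Set (FreeGroup V) :=
  { r | ∃ u v, Γ.Adj u v ∧
      r = artinWord u v (Γ.label u v) * (artinWord v u (Γ.label u v))⁻¹ }

/-- The Artin group of a labeled graph. -/
abbrev ArtinGroup := PresentedGroup Γ.artinRels

/-- The canonical generator of the Artin group corresponding to a vertex. -/
def gen (v : V) : Γ.ArtinGroup := PresentedGroup.of v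

/-- The standard parabolic subgroup associated to a set of vertices. -/
def parabolic (S : Set V) : Subgroup Γ.ArtinGroup :=
  Subgroup.closure (Γ.gen '' S)

/-- An Artin group (graph) is even if all labels are even. -/
def IsEven : Prop := ∀ {u v}, Γ.Adj u v → Even (Γ.label u v)

/-- An even Artin group is of FC-type iff every triangle has at least two labels equal to 2. -/
def IsEvenFC : Prop := Γ.IsEven ∧
  ∀ {u v w}, Γ.Adj u v → Γ.Adj v w → Γ.Adj u w →
    (Γ.label u v = 2 ∧ Γ.label v w = 2) ∨ (Γ.label u v = 2 ∧ Γ.label u w = 2) ∨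
      (Γ.label v w = 2 ∧ Γ.label u w = 2)

/-- A parabolic subgroup: a conjugate of a standard parabolic subgroup. -/
def IsParabolic (P : Subgroup Γ.ArtinGroup) : Prop :=
  ∃ (g : Γ.ArtinGroup) (S : Set V),
    P = (Γ.parabolic S).map (MulAut.conj g).toMonoidHom

end LabeledGraph

/-- A group is finitely presented if it is isomorphic to the quotient of a
finitely generated free group by finitely many relations. -/
def IsFinitelyPresentedGroup (G : Type*) [Group G] : Prop :=
  ∃ (n : ℕ) (rels : Set (FreeGroup (Fin n))), rels.Finite ∧
    Nonempty (PresentedGroup rels ≃* G)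

/-- A group is coherent if every finitely generated subgroup is finitely presented. -/
def IsCoherentGroup (G : Type*) [Group G] : Prop :=
  ∀ H : Subgroup G, H.FG → IsFinitelyPresentedGroup H



namespace LabeledGraph

variable {V : Type} (Γ : LabeledGraph V)

lemma artinWord_succ (u v : V) (m : ℕ) :
    artinWord u v (m+1) = artinWord u v m * FreeGroup.of (if m % 2 = 0 then u else v) := by
  unfold artinWord
  rw [List.range_succ, List.map_append, List.prod_append]
  simp

lemma artinWord_double (u v : V) (k : ℕ) :
    artinWord u v (k+k) = (FreeGroup.of u * FreeGroup.of v)^k := by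
  induction k with
  | zero => simp [artinWord]
  | succ n ih =>
    have h1 : (n+1)+(n+1) = ((n+n)+1)+1 := by omega
    rw [h1, artinWord_succ, artinWord_succ, ih]
    have h2 : (n+n) % 2 = 0 := by omega
    have h3 : ((n+n)+1) % 2 = 1 := by omega
    rw [h2, h3]
    simp [pow_succ, mul_assoc]

lemma map_artinWord {G : Type*} [Group G] (φ : FreeGroup V →* G) (u v : V) (k : ℕ) :
    φ (artinWord u v (k+k)) = (φ (FreeGroup.of u) * φ (FreeGroup.of v))^k := by
  rw [artinWord_double, map_pow, map_mul]

lemma gen_rel {u v : V} (h : Γ.Adj u v) (k : ℕ) (hk : Γ.label u v = k + k) :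
    (Γ.gen u * Γ.gen v)^k = (Γ.gen v * Γ.gen u)^k := by
  have hr : artinWord u v (Γ.label u v) * (artinWord v u (Γ.label u v))⁻¹ ∈ Γ.artinRels :=
    ⟨u, v, h, rfl⟩
  have h1 : PresentedGroup.mk Γ.artinRels
      (artinWord u v (Γ.label u v) * (artinWord v u (Γ.label u v))⁻¹) = 1 :=
    (QuotientGroup.eq_one_iff _).mpr (Subgroup.subset_normalClosure hr)
  rw [map_mul, map_inv, mul_inv_eq_one, hk, map_artinWord, map_artinWord] at h1
  exact h1

lemma exists_retraction (hE : Γ.IsEven) (S : Set V) :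
    ∃ ρ : Γ.ArtinGroup →* Γ.ArtinGroup,
      (∀ v ∈ S, ρ (Γ.gen v) = Γ.gen v) ∧ (∀ x, ρ x ∈ Γ.parabolic S) ∧
      (∀ x ∈ Γ.parabolic S, ρ x = x) := by
  classical
  have hrel : ∀ r ∈ Γ.artinRels,
      FreeGroup.lift (fun v => if v ∈ S then Γ.gen v else 1) r = 1 := by
    rintro r ⟨u, v, huv, rfl⟩
    obtain ⟨k, hk⟩ := hE huv
    rw [map_mul, map_inv, hk, map_artinWord, map_artinWord, mul_inv_eq_one]
    by_cases hu : u ∈ S <;> by_cases hv : v ∈ S <;>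
      simp only [FreeGroup.lift_apply_of, hu, hv, if_true, if_false, ite_true, ite_false,
        mul_one, one_mul]
    exact Γ.gen_rel huv k hk
  refine ⟨PresentedGroup.toGroup hrel, ?_, ?_, ?_⟩
  · intro v hv
    have h1 : PresentedGroup.toGroup hrel (Γ.gen v)
        = if v ∈ S then Γ.gen v else 1 := PresentedGroup.toGroup.of hrel
    rw [h1]; simp [hv]
  · intro x
    refine PresentedGroup.generated_by Γ.artinRels
      ((Γ.parabolic S).comap (PresentedGroup.toGroup hrel)) ?_ x
    intro j
    have h1 : PresentedGroup.toGroup hrel (Γ.gen j)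
        = if j ∈ S then Γ.gen j else 1 := PresentedGroup.toGroup.of hrel
    show PresentedGroup.toGroup hrel (PresentedGroup.of j) ∈ Γ.parabolic S
    rw [show (PresentedGroup.of j : Γ.ArtinGroup) = Γ.gen j from rfl, h1]
    by_cases hj : j ∈ S
    · simp only [hj, if_true, ite_true]
      exact Subgroup.subset_closure ⟨j, hj, rfl⟩
    · simp only [hj, if_false, ite_false]
      exact one_mem _
  · intro x hx
    refine Subgroup.closure_induction (fun y hy => ?_) (by simp) ?_ ?_ hx
    · obtain ⟨v, hv, rfl⟩ := hy
      have h1 : PresentedGroup.toGroup hrel (Γ.gen v)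
          = if v ∈ S then Γ.gen v else 1 := PresentedGroup.toGroup.of hrel
      rw [h1]; simp [hv]
    · intro a b _ _ ha hb; rw [map_mul, ha, hb]
    · intro a _ ha; rw [map_inv, ha]

lemma conj_map_map {G : Type*} [Group G] (a b : G) (K : Subgroup G) :
    (K.map (MulAut.conj b).toMonoidHom).map (MulAut.conj a).toMonoidHom
      = K.map (MulAut.conj (a*b)).toMonoidHom := by
  rw [Subgroup.map_map]
  congr 1
  ext x
  simp [mul_assoc]

lemma map_conj_one {G : Type*} [Group G] (K : Subgroup G) :
    K.map (MulAut.conj (1:G)).toMonoidHom = K := by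
  have : (MulAut.conj (1:G)).toMonoidHom = MonoidHom.id G := by ext x; simp
  rw [this, Subgroup.map_id]

lemma map_conj_self {G : Type*} [Group G] {P : Subgroup G} {a : G} (ha : a ∈ P) :
    P.map (MulAut.conj a).toMonoidHom = P := by
  apply le_antisymm
  · rintro x ⟨y, hy, rfl⟩
    simpa using mul_mem (mul_mem ha hy) (inv_mem ha)
  · intro x hx
    refine ⟨a⁻¹ * x * a, mul_mem (mul_mem (inv_mem ha) hx) ha, ?_⟩
    simp [mul_assoc]

lemma conj_parabolic_eq (hE : Γ.IsEven) (S : Set V) (h : Γ.ArtinGroup)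
    (hle : Γ.parabolic S ≤ (Γ.parabolic S).map (MulAut.conj h).toMonoidHom) :
    (Γ.parabolic S).map (MulAut.conj h).toMonoidHom = Γ.parabolic S := by
  obtain ⟨ρ, hfixgen, hrange, hfix⟩ := Γ.exists_retraction hE S
  have hmem : ∀ v ∈ S, h⁻¹ * Γ.gen v * h ∈ Γ.parabolic S := by
    intro v hv
    have hg : Γ.gen v ∈ (Γ.parabolic S).map (MulAut.conj h).toMonoidHom :=
      hle (Subgroup.subset_closure ⟨v, hv, rfl⟩)
    obtain ⟨y, hy, hxy⟩ := hg
    have : h⁻¹ * Γ.gen v * h = y := by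
      rw [← hxy]; simp [mul_assoc]
    rwa [this]
  have ha : ρ h ∈ Γ.parabolic S := hrange h
  have hconj : ∀ v ∈ S, h⁻¹ * Γ.gen v * h = (ρ h)⁻¹ * Γ.gen v * (ρ h) := by
    intro v hv
    have h1 := hfix _ (hmem v hv)
    rw [map_mul, map_mul, map_inv, hfixgen v hv] at h1
    exact h1.symm
  have hmapeq : (Γ.parabolic S).map (MulAut.conj h⁻¹).toMonoidHom
      = (Γ.parabolic S).map (MulAut.conj (ρ h)⁻¹).toMonoidHom := by
    unfold parabolic
    rw [MonoidHom.map_closure, MonoidHom.map_closure]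
    congr 1
    apply Set.image_congr
    rintro x ⟨v, hv, rfl⟩
    simp only [MulEquiv.coe_toMonoidHom, MulAut.conj_apply, inv_inv]
    exact hconj v hv
  have hone : (Γ.parabolic S).map (MulAut.conj h⁻¹).toMonoidHom = Γ.parabolic S := by
    rw [hmapeq, map_conj_self (inv_mem ha)]
  calc (Γ.parabolic S).map (MulAut.conj h).toMonoidHom
      = ((Γ.parabolic S).map (MulAut.conj h⁻¹).toMonoidHom).map
          (MulAut.conj h).toMonoidHom := by rw [hone]
    _ = (Γ.parabolic S).map (MulAut.conj (h * h⁻¹)).toMonoidHom := conj_map_map h h⁻¹ _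
    _ = Γ.parabolic S := by rw [mul_inv_cancel, map_conj_one]

lemma conj_parabolic_le (hE : Γ.IsEven) (S : Set V) (g g' : Γ.ArtinGroup)
    (hle : (Γ.parabolic S).map (MulAut.conj g).toMonoidHom
      ≤ (Γ.parabolic S).map (MulAut.conj g').toMonoidHom) :
    (Γ.parabolic S).map (MulAut.conj g).toMonoidHom
      = (Γ.parabolic S).map (MulAut.conj g').toMonoidHom := by
  have h2 : Γ.parabolic S ≤ (Γ.parabolic S).map (MulAut.conj (g⁻¹ * g')).toMonoidHom := by
    have h3 := Subgroup.map_mono (f := (MulAut.conj g⁻¹).toMonoidHom) hle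
    rwa [conj_map_map, conj_map_map, inv_mul_cancel, map_conj_one] at h3
  have h4 := Γ.conj_parabolic_eq hE S _ h2
  have h5 := congrArg (Subgroup.map (MulAut.conj g).toMonoidHom) h4
  rw [conj_map_map, ← mul_assoc, mul_inv_cancel, one_mul] at h5
  exact h5.symm

end LabeledGraph

/-- In an even Artin group of FC-type, the minimal parabolic subgroup
containing a subset `X` coincides with the minimal parabolic subgroup containing some
finite subset `X' ⊆ X`.  (Here `Pmin` is the assignment of the unique minimal
parabolic subgroup containing a given subset.) -/
theorem minimal_parabolic_of_finite_subset
    {V : Type} [Finite V] (Γ : LabeledGraph V) (hFC : Γ.IsEvenFC)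
    (Pmin : Set Γ.ArtinGroup → Subgroup Γ.ArtinGroup)
    (hPmin : ∀ Y : Set Γ.ArtinGroup, Γ.IsParabolic (Pmin Y) ∧ Y ⊆ ↑(Pmin Y) ∧
      ∀ Q : Subgroup Γ.ArtinGroup, Γ.IsParabolic Q → Y ⊆ ↑Q → Pmin Y ≤ Q)
    (X : Set Γ.ArtinGroup) :
    ∃ X' : Set Γ.ArtinGroup, X' ⊆ X ∧ X'.Finite ∧ Pmin X = Pmin X' := by
  classical
  by_cases hfin : ∃ X' : Set Γ.ArtinGroup, X' ⊆ X ∧ X'.Finite ∧ X ⊆ ↑(Pmin X')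
  · obtain ⟨X', hsub, hXf, hcon⟩ := hfin
    refine ⟨X', hsub, hXf, le_antisymm ?_ ?_⟩
    · exact (hPmin X).2.2 _ (hPmin X').1 hcon
    · exact (hPmin X').2.2 _ (hPmin X).1 (hsub.trans (hPmin X).2.1)
  · exfalso
    have key : ∀ A : Set Γ.ArtinGroup, A ⊆ X → A.Finite →
        ∃ x, x ∈ X ∧ x ∉ (Pmin A : Set Γ.ArtinGroup) := by
      intro A h1 h2
      by_contra hc
      push_neg at hc
      exact hfin ⟨A, h1, h2, fun x hx => by
        by_contra hx2; exact hx2 (hc x hx)⟩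
    choose pick hpX hpP using key
    let step : {A : Set Γ.ArtinGroup // A ⊆ X ∧ A.Finite} →
        {A : Set Γ.ArtinGroup // A ⊆ X ∧ A.Finite} := fun A =>
      ⟨insert (pick A.1 A.2.1 A.2.2) A.1,
        Set.insert_subset (hpX A.1 A.2.1 A.2.2) A.2.1, A.2.2.insert _⟩
    let c : ℕ → {A : Set Γ.ArtinGroup // A ⊆ X ∧ A.Finite} :=
      fun n => step^[n] ⟨∅, by simp, Set.finite_empty⟩
    have hcs : ∀ n, c (n+1) = step (c n) := fun n =>
      Function.iterate_succ_apply' step n _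
    have hlt : ∀ n, Pmin (c n).1 < Pmin (c (n+1)).1 := by
      intro n
      have hsub : (c n).1 ⊆ (c (n+1)).1 := by
        rw [hcs n]; exact Set.subset_insert _ _
      have hle : Pmin (c n).1 ≤ Pmin (c (n+1)).1 :=
        (hPmin _).2.2 _ (hPmin _).1 (hsub.trans (hPmin _).2.1)
      refine lt_of_le_of_ne hle ?_
      intro heq
      apply hpP (c n).1 (c n).2.1 (c n).2.2
      have hxmem : pick (c n).1 (c n).2.1 (c n).2.2 ∈ (c (n+1)).1 := by
        rw [hcs n]; exact Set.mem_insert _ _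
      have hmem := (hPmin (c (n+1)).1).2.1 hxmem
      rw [← heq] at hmem
      exact hmem
    have hmono : StrictMono (fun n => Pmin (c n).1) := strictMono_nat_of_lt_succ hlt
    choose g S hdec using fun n => (hPmin (c n).1).1
    have main : ∀ n m : ℕ, n < m → S n = S m → False := by
      intro n m hnm hS
      have h1 : Pmin (c n).1 < Pmin (c m).1 := hmono hnm
      rw [hdec n, hdec m, hS] at h1
      exact h1.ne (Γ.conj_parabolic_le hFC.1 (S m) _ _ h1.le)
    obtain ⟨n, m, hne, hSeq⟩ := Finite.exists_ne_map_eq_of_infinite S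
    rcases hne.lt_or_gt with h | h
    · exact main n m h hSeq
    · exact main m n h hSeq.symm
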